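/- If G is a p-sphere and H is a q-sphere, then the Zykov join G⊕H is a (p+q+1)-sphere. -/

import Mathlib

open scoped Classical

/-- A finite simple graph: a finite vertex set together with a symmetric, irreflexive
adjacency relation supported on the vertex set. -/
structure FGraph (V : Type) where
  verts : Finset V
  Adj : V → V → Prop
  symm : ∀ {a b}, Adj a b → Adj b a
  loopless : ∀ a, ¬ Adj a a
  mem_of_adj : ∀ {a b}, Adj a b → a ∈ verts

namespace FGraph

variable {V W : Type}

/-- The subgraph induced on the vertices satisfying `P`. -/
noncomputable def induce (G : FGraph V) (P : V → Prop) : FGraph V where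
  verts := G.verts.filter P
  Adj a b := G.Adj a b ∧ P a ∧ P b
  symm h := ⟨G.symm h.1, h.2.2, h.2.1⟩
  loopless a h := G.loopless a h.1
  mem_of_adj h := Finset.mem_filter.mpr ⟨G.mem_of_adj h.1, h.2.1⟩

/-- The unit sphere of a vertex: the subgraph induced on its neighbors. -/
noncomputable def unitSphere (G : FGraph V) (v : V) : FGraph V :=
  G.induce (fun w => G.Adj v w)

/-- The graph with the vertex `v` (and its edges) removed. -/
noncomputable def erase (G : FGraph V) (v : V) : FGraph V :=
  G.induce (fun w => w ≠ v)

/-- Inductive definition of contractibility: the one-point graph is contractible, and a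
graph is contractible if some vertex has a contractible unit sphere and contractible
complement. -/
inductive Contractible : FGraph V → Prop
  | single (G : FGraph V) (v : V) (h : G.verts = {v}) : Contractible G
  | step (G : FGraph V) (v : V) (hv : v ∈ G.verts)
      (h1 : Contractible (G.unitSphere v)) (h2 : Contractible (G.erase v)) :
      Contractible G

mutual
  /-- `G` is a `d`-sphere: the empty graph is the `(-1)`-sphere, and a `d`-manifold is a
  `d`-sphere if removing some vertex renders it contractible. -/
  inductive IsSphere : ℤ → FGraph V → Prop
    | empty (G : FGraph V) (h : G.verts = ∅) : IsSphere (-1) G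
    | punctured (d : ℤ) (G : FGraph V) (hm : IsManifold d G) (v : V) (hv : v ∈ G.verts)
        (hc : Contractible (G.erase v)) : IsSphere d G
  /-- For `d ≥ 0`, `G` is a `d`-manifold iff every unit sphere is a `(d-1)`-sphere. -/
  inductive IsManifold : ℤ → FGraph V → Prop
    | intro (d : ℤ) (hd : 0 ≤ d) (G : FGraph V)
        (h : ∀ v ∈ G.verts, IsSphere (d - 1) (G.unitSphere v)) : IsManifold d G
end

/-- A simplex of `G`: the vertex set of a complete subgraph. -/
def IsSimplex (G : FGraph V) (x : Finset V) : Prop :=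
  x.Nonempty ∧ ↑x ⊆ G.verts ∧ ∀ a ∈ x, ∀ b ∈ x, a ≠ b → G.Adj a b

/-- The Barycentric refinement: vertices are the simplices of `G`, two being adjacent iff
one is strictly contained in the other. -/
noncomputable def barycentric (G : FGraph V) : FGraph (Finset V) where
  verts := G.verts.powerset.filter (fun x => G.IsSimplex x)
  Adj x y := G.IsSimplex x ∧ G.IsSimplex y ∧ (x ⊂ y ∨ y ⊂ x)
  symm h := ⟨h.2.1, h.1, h.2.2.symm⟩
  loopless x h := by rcases h.2.2 with h' | h' <;> exact (ssubset_irrefl x h')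
  mem_of_adj h := Finset.mem_filter.mpr ⟨Finset.mem_powerset.mpr h.1.2.1, h.1⟩

/-- Number of simplices of `G` with exactly `j` vertices (so `numSimplices G (k+1)` is
the `f`-vector entry `f_k(G)`). -/
noncomputable def numSimplices (G : FGraph V) (j : ℕ) : ℕ :=
  (G.verts.powerset.filter (fun x => G.IsSimplex x ∧ x.card = j)).card

/-- Euler characteristic `χ(G) = Σ_{k ≥ 0} (-1)^k f_k(G)`, where `f_k` counts the
simplices with `k+1` vertices. -/
noncomputable def euler (G : FGraph V) : ℤ :=
  ∑ k ∈ Finset.range G.verts.card, (-1 : ℤ) ^ k * G.numSimplices (k + 1)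

/-- The level set `{f = c}`: the subgraph of the Barycentric refinement induced by the
simplices on which `f - c` changes sign. -/
noncomputable def levelSet (G : FGraph V) (f : V → ℝ) (c : ℝ) : FGraph (Finset V) :=
  G.barycentric.induce (fun x => (∃ a ∈ x, f a - c < 0) ∧ (∃ b ∈ x, 0 < f b - c))

/-- Graph isomorphism. -/
def Iso (G : FGraph V) (H : FGraph W) : Prop :=
  ∃ φ : V → W, Set.BijOn φ ↑G.verts ↑H.verts ∧
    ∀ a ∈ G.verts, ∀ b ∈ G.verts, (G.Adj a b ↔ H.Adj (φ a) (φ b))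

/-- Zykov join of two graphs: disjoint union plus all edges between the two parts. -/
noncomputable def join (G : FGraph V) (H : FGraph W) : FGraph (V ⊕ W) where
  verts := G.verts.disjSum H.verts
  Adj a b :=
    match a, b with
    | .inl a, .inl b => G.Adj a b
    | .inr a, .inr b => H.Adj a b
    | .inl a, .inr b => a ∈ G.verts ∧ b ∈ H.verts
    | .inr a, .inl b => b ∈ G.verts ∧ a ∈ H.verts
  symm {a b} h := by
    cases a <;> cases b <;> simp_all <;> first | exact G.symm h | exact H.symm h
  loopless a h := by
    cases a <;> simp_all <;> first | exact G.loopless _ h | exact H.loopless _ h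
  mem_of_adj {a b} h := by
    cases a <;> cases b <;> simp_all [Finset.mem_disjSum] <;>
      first | exact G.mem_of_adj h | exact H.mem_of_adj h

/-- Union of two graphs on the same vertex type. -/
noncomputable def union (G H : FGraph V) : FGraph V where
  verts := G.verts ∪ H.verts
  Adj a b := G.Adj a b ∨ H.Adj a b
  symm h := h.imp G.symm H.symm
  loopless a h := h.elim (G.loopless a) (H.loopless a)
  mem_of_adj h :=
    h.elim (fun h' => Finset.mem_union_left _ (G.mem_of_adj h'))
      (fun h' => Finset.mem_union_right _ (H.mem_of_adj h'))

/-- A `d`-ball: a graph of the form `S - v` for a `d`-sphere `S` and a vertex `v` of `S`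
(up to graph isomorphism). -/
def IsBall (d : ℤ) (H : FGraph W) : Prop :=
  ∃ (S : FGraph ℕ) (v : ℕ), IsSphere d S ∧ v ∈ S.verts ∧ Iso H (S.erase v)

/-- A `d`-manifold with boundary: every unit sphere is a `(d-1)`-sphere or a `(d-1)`-ball. -/
def IsManifoldWithBoundary (d : ℤ) (G : FGraph V) : Prop :=
  ∀ v ∈ G.verts, IsSphere (d - 1) (G.unitSphere v) ∨ IsBall (d - 1) (G.unitSphere v)

/-- The cyclic graph `C_n` on the vertex set `Fin n`. -/
def cycleGraph (n : ℕ) : FGraph (Fin n) where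
  verts := Finset.univ
  Adj a b := a ≠ b ∧ ((a.val + 1) % n = b.val ∨ (b.val + 1) % n = a.val)
  symm h := ⟨h.1.symm, h.2.symm⟩
  loopless a h := h.1 rfl
  mem_of_adj _ := Finset.mem_univ _

/-- `G` is a disjoint union of cyclic graphs `C_n` with `n ≥ 4`: the vertex set splits
into pairwise disjoint pieces, edges never cross between pieces, and each piece induces
a graph isomorphic to a `C_n` with `n ≥ 4`. -/
def IsDisjointUnionOfCycles (G : FGraph V) : Prop :=
  ∃ P : Finset (Finset V),
    (∀ S ∈ P, ↑S ⊆ G.verts) ∧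
    (∀ S ∈ P, ∀ T ∈ P, S ≠ T → Disjoint S T) ∧
    (∀ v ∈ G.verts, ∃ S ∈ P, v ∈ S) ∧
    (∀ a b, G.Adj a b → ∀ S ∈ P, a ∈ S → b ∈ S) ∧
    (∀ S ∈ P, ∃ n, 4 ≤ n ∧ Iso (G.induce (· ∈ S)) (cycleGraph n))

/-- Poincaré–Hopf index `i_f(v) = 1 - χ(S^-_f(v))`. -/
noncomputable def pindex (G : FGraph V) (f : V → ℝ) (v : V) : ℤ :=
  1 - ((G.unitSphere v).induce (fun w => f w < f v)).euler

/-- Curvature `K(v) = Σ_{k ≥ 0} (-1)^k f_{k-1}(S(v))/(k+1)` with `f_{-1} = 1`. -/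
noncomputable def curvature (G : FGraph V) (v : V) : ℝ :=
  ∑ k ∈ Finset.range (G.verts.card + 1),
    (-1 : ℝ) ^ k * (if k = 0 then 1 else ((G.unitSphere v).numSimplices k : ℝ)) / (k + 1)

end FGraph

/-- `sign(a + i b) = sign(a) + i sign(b)`. -/
noncomputable def csgn (z : ℂ) : ℂ :=
  ⟨Real.sign z.re, Real.sign z.im⟩

/-- The set `U = {1+i, 1-i, -1+i, -1-i}` of possible values of `csgn`. -/
noncomputable def signU : Finset ℂ :=
  {1 + Complex.I, 1 - Complex.I, -1 + Complex.I, -1 - Complex.I}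

namespace FGraph

variable {V : Type}

/-- The set of values of `sign(ψ - c)` attained on the finite vertex set `x`. -/
noncomputable def signValues (ψ : V → ℂ) (c : ℂ) (x : Finset V) : Finset ℂ :=
  x.image (fun v => csgn (ψ v - c))

/-- The level set `{ψ = c}` of a complex-valued function: the subgraph of the Barycentric
refinement induced by the simplices on which `sign(ψ - c)` takes at least three distinct
values, including `-1+i` and `1-i`. -/
noncomputable def complexLevelSet (G : FGraph V) (ψ : V → ℂ) (c : ℂ) : FGraph (Finset V) :=
  G.barycentric.induce (fun x =>
    3 ≤ (signValues ψ c x).card ∧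
    (-1 + Complex.I) ∈ signValues ψ c x ∧ (1 - Complex.I) ∈ signValues ψ c x)

/-- The level set `{ψ = 0}_e` for a two-element subset `e ⊆ U`: the subgraph of the
Barycentric refinement induced by the simplices on which `sign(ψ)` attains both values
of `e` and at least three distinct values in total. -/
noncomputable def complexLevelSetE (G : FGraph V) (ψ : V → ℂ) (e : Finset ℂ) :
    FGraph (Finset V) :=
  G.barycentric.induce (fun x =>
    (∀ u ∈ e, u ∈ signValues ψ 0 x) ∧ 3 ≤ (signValues ψ 0 x).card)

/-- `Ψ^{-1}(t)`: the subgraph of the Barycentric refinement induced by the simplices on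
which `sign(ψ)` attains all values of `t`. -/
noncomputable def signPreimage (G : FGraph V) (ψ : V → ℂ) (t : Finset ℂ) :
    FGraph (Finset V) :=
  G.barycentric.induce (fun x => ∀ u ∈ t, u ∈ signValues ψ 0 x)

/-- The sign vectors of `F - c` attained on the finite vertex set `x`. -/
noncomputable def vecSignValues {k : ℕ} (F : V → Fin k → ℝ) (c : Fin k → ℝ)
    (x : Finset V) : Finset (Fin k → ℝ) :=
  x.image (fun v j => Real.sign (F v j - c j))

/-- The level set `{F = c}` of an `ℝ^k`-valued function: the subgraph of the Barycentric
refinement induced by the simplices on which the sign vector of `F - c` takes at least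
`k+1` distinct values, including the `k` vectors `(1,…,1,-1,1,…,1)`. -/
noncomputable def vecLevelSet (G : FGraph V) {k : ℕ} (F : V → Fin k → ℝ) (c : Fin k → ℝ) :
    FGraph (Finset V) :=
  G.barycentric.induce (fun x =>
    k + 1 ≤ (vecSignValues F c x).card ∧
    ∀ j : Fin k, (fun i => if i = j then (-1 : ℝ) else 1) ∈ vecSignValues F c x)

end FGraph

/-- The complete graph on `Fin n`. -/
def completeFGraph (n : ℕ) : FGraph (Fin n) where
  verts := Finset.univ
  Adj a b := a ≠ b
  symm h := h.symm
  loopless a h := h rfl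
  mem_of_adj _ := Finset.mem_univ _

/-- Stirling numbers of the second kind. -/
def stirling2 : ℕ → ℕ → ℕ
  | 0, 0 => 1
  | 0, _ + 1 => 0
  | _ + 1, 0 => 0
  | n + 1, m + 1 => (m + 1) * stirling2 n (m + 1) + stirling2 n m

/-! Unit spheres and vertex deletions commute with the join: for `v ∈ G` one has
`S_{G ⊕ H}(v) = S_G(v) ⊕ H` and `(G ⊕ H) - v = (G - v) ⊕ H`, and symmetrically for vertices
of `H`. Hence joining preserves contractibility (a cone `{v} ⊕ H` collapses by removing the
vertices of `H` one at a time), so puncturing `G` or `H` punctures `G ⊕ H` to a contractible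
graph. By induction on the number of vertices, every unit sphere of `G ⊕ H` is the join of a
`(p-1)`-sphere with a `q`-sphere or of a `p`-sphere with a `(q-1)`-sphere, i.e. a
`(p+q)`-sphere, so `G ⊕ H` is a `(p+q+1)`-manifold. -/

namespace FGraph

variable {V W : Type}

theorem ext {G H : FGraph V} (hv : G.verts = H.verts)
    (ha : ∀ a b, G.Adj a b ↔ H.Adj a b) : G = H := by
  obtain ⟨vG, A, _, _, _⟩ := G
  obtain ⟨vH, B, _, _, _⟩ := H
  obtain rfl : vG = vH := hv
  obtain rfl : A = B := funext₂ fun a b => propext (ha a b)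
  rfl

theorem mem_verts_of_adj (G : FGraph V) {a b : V} (h : G.Adj a b) :
    a ∈ G.verts ∧ b ∈ G.verts :=
  ⟨G.mem_of_adj h, G.mem_of_adj (G.symm h)⟩

theorem card_induce_lt (G : FGraph V) {P : V → Prop} {v : V} (hv : v ∈ G.verts)
    (hP : ¬ P v) : (G.induce P).verts.card < G.verts.card :=
  Finset.card_lt_card (Finset.filter_ssubset.mpr ⟨v, hv, hP⟩)

theorem card_unitSphere_lt (G : FGraph V) {v : V} (hv : v ∈ G.verts) :
    (G.unitSphere v).verts.card < G.verts.card :=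
  G.card_induce_lt hv (G.loopless v)

theorem card_erase_lt (G : FGraph V) {v : V} (hv : v ∈ G.verts) :
    (G.erase v).verts.card < G.verts.card :=
  G.card_induce_lt hv (not_not_intro rfl)

section join

variable (G : FGraph V) (H : FGraph W)

@[simp]
theorem inl_mem_join_verts {v : V} : Sum.inl v ∈ (G.join H).verts ↔ v ∈ G.verts :=
  Finset.inl_mem_disjSum

@[simp]
theorem inr_mem_join_verts {w : W} : Sum.inr w ∈ (G.join H).verts ↔ w ∈ H.verts :=
  Finset.inr_mem_disjSum

@[simp]
theorem join_adj_inl_inl {a b : V} : (G.join H).Adj (.inl a) (.inl b) ↔ G.Adj a b := Iff.rfl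

@[simp]
theorem join_adj_inr_inr {a b : W} : (G.join H).Adj (.inr a) (.inr b) ↔ H.Adj a b := Iff.rfl

@[simp]
theorem join_adj_inl_inr {a : V} {b : W} :
    (G.join H).Adj (.inl a) (.inr b) ↔ a ∈ G.verts ∧ b ∈ H.verts := Iff.rfl

@[simp]
theorem join_adj_inr_inl {a : W} {b : V} :
    (G.join H).Adj (.inr a) (.inl b) ↔ b ∈ G.verts ∧ a ∈ H.verts := Iff.rfl

theorem join_unitSphere_inl {v : V} (hv : v ∈ G.verts) :
    (G.join H).unitSphere (Sum.inl v) = (G.unitSphere v).join H := by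
  apply ext
  · ext (a | a) <;> simp [unitSphere, induce, hv]
  · rintro (a | a) (b | b) <;>
      simp only [unitSphere, induce, Finset.mem_filter, join_adj_inl_inl, join_adj_inr_inr,
        join_adj_inl_inr, join_adj_inr_inl, hv, true_and] <;>
      first | tauto | exact and_iff_left_of_imp H.mem_verts_of_adj

theorem join_unitSphere_inr {w : W} (hw : w ∈ H.verts) :
    (G.join H).unitSphere (Sum.inr w) = G.join (H.unitSphere w) := by
  apply ext
  · ext (a | a) <;> simp [unitSphere, induce, hw]
  · rintro (a | a) (b | b) <;>
      simp only [unitSphere, induce, Finset.mem_filter, join_adj_inl_inl, join_adj_inr_inr,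
        join_adj_inl_inr, join_adj_inr_inl, hw, and_true] <;>
      first | tauto | exact and_iff_left_of_imp G.mem_verts_of_adj

theorem join_erase_inl (v : V) : (G.join H).erase (Sum.inl v) = (G.erase v).join H := by
  apply ext
  · ext (a | a) <;> simp [erase, induce]
  · rintro (a | a) (b | b) <;>
      simp only [erase, induce, Finset.mem_filter, ne_eq, Sum.inl.injEq, reduceCtorEq,
        not_false_eq_true, and_true, join_adj_inl_inl, join_adj_inr_inr, join_adj_inl_inr,
        join_adj_inr_inl] <;> tauto

theorem join_erase_inr (w : W) : (G.join H).erase (Sum.inr w) = G.join (H.erase w) := by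
  apply ext
  · ext (a | a) <;> simp [erase, induce]
  · rintro (a | a) (b | b) <;>
      simp only [erase, induce, Finset.mem_filter, ne_eq, Sum.inr.injEq, reduceCtorEq,
        not_false_eq_true, and_true, join_adj_inl_inl, join_adj_inr_inr, join_adj_inl_inr,
        join_adj_inr_inl] <;> tauto

end join

theorem contractible_join_of_left {G : FGraph V} (hG : Contractible G) (H : FGraph W) :
    Contractible (G.join H) := by
  induction hn : H.verts.card using Nat.strong_induction_on generalizing G H with
  | _ n ih =>
  induction hG with
  | single G v hv =>
    rcases H.verts.eq_empty_or_nonempty with hH | ⟨w, hw⟩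
    · exact .single _ (.inl v) (by ext (a | a) <;> simp [join, hv, hH])
    · refine .step _ (.inr w) (by simpa using hw) ?_ ?_
      · rw [join_unitSphere_inr _ _ hw]
        exact ih _ (hn ▸ H.card_unitSphere_lt hw) (.single G v hv) _ rfl
      · rw [join_erase_inr]
        exact ih _ (hn ▸ H.card_erase_lt hw) (.single G v hv) _ rfl
  | step G v hv _ _ ih₁ ih₂ =>
    refine .step _ (.inl v) (by simpa using hv) ?_ ?_
    · rw [join_unitSphere_inl _ _ hv]
      exact ih₁
    · rw [join_erase_inl]
      exact ih₂

theorem contractible_join_of_right (G : FGraph V) {H : FGraph W} (hH : Contractible H) :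
    Contractible (G.join H) := by
  induction hn : G.verts.card using Nat.strong_induction_on generalizing G H with
  | _ n ih =>
  induction hH with
  | single H w hw =>
    rcases G.verts.eq_empty_or_nonempty with hG | ⟨v, hv⟩
    · exact .single _ (.inr w) (by ext (a | a) <;> simp [join, hw, hG])
    · refine .step _ (.inl v) (by simpa using hv) ?_ ?_
      · rw [join_unitSphere_inl _ _ hv]
        exact ih _ (hn ▸ G.card_unitSphere_lt hv) _ (.single H w hw) rfl
      · rw [join_erase_inl]
        exact ih _ (hn ▸ G.card_erase_lt hv) _ (.single H w hw) rfl
  | step H w hw _ _ ih₁ ih₂ =>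
    refine .step _ (.inr w) (by simpa using hw) ?_ ?_
    · rw [join_unitSphere_inr _ _ hw]
      exact ih₁
    · rw [join_erase_inr]
      exact ih₂

namespace IsSphere

variable {d : ℤ} {G : FGraph V}

theorem eq_neg_one_of_verts_eq_empty (hG : IsSphere d G) (h : G.verts = ∅) : d = -1 := by
  cases hG with
  | empty => rfl
  | punctured _ _ _ v hv => simp [h] at hv

theorem nonneg_of_mem (hG : IsSphere d G) {v : V} (hv : v ∈ G.verts) : 0 ≤ d := by
  cases hG with
  | empty _ h => simp [h] at hv
  | punctured _ _ hm => cases hm with | intro _ hd => exact hd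

theorem neg_one_le (hG : IsSphere d G) : -1 ≤ d := by
  rcases G.verts.eq_empty_or_nonempty with h | ⟨v, hv⟩
  · exact (hG.eq_neg_one_of_verts_eq_empty h).ge
  · linarith [hG.nonneg_of_mem hv]

theorem isSphere_unitSphere (hG : IsSphere d G) {v : V} (hv : v ∈ G.verts) :
    IsSphere (d - 1) (G.unitSphere v) := by
  cases hG with
  | empty _ h => simp [h] at hv
  | punctured _ _ hm => cases hm with | intro _ _ _ h => exact h v hv

theorem exists_contractible_erase (hG : IsSphere d G) (hne : G.verts.Nonempty) :
    ∃ v ∈ G.verts, Contractible (G.erase v) := by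
  cases hG with
  | empty _ h => simp [h] at hne
  | punctured _ _ _ v hv hc => exact ⟨v, hv, hc⟩

end IsSphere

theorem exists_contractible_erase_join {p q : ℤ} {G : FGraph V} {H : FGraph W}
    (hG : IsSphere p G) (hH : IsSphere q H) (hne : (G.join H).verts.Nonempty) :
    ∃ x ∈ (G.join H).verts, Contractible ((G.join H).erase x) := by
  obtain ⟨v | w, hx⟩ := hne
  · obtain ⟨v, hv, hc⟩ := hG.exists_contractible_erase ⟨v, by simpa using hx⟩
    refine ⟨.inl v, by simpa using hv, ?_⟩
    rw [join_erase_inl]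
    exact contractible_join_of_left hc H
  · obtain ⟨w, hw, hc⟩ := hH.exists_contractible_erase ⟨w, by simpa using hx⟩
    refine ⟨.inr w, by simpa using hw, ?_⟩
    rw [join_erase_inr]
    exact contractible_join_of_right G hc

theorem nonneg_of_mem_join {p q : ℤ} {G : FGraph V} {H : FGraph W} (hG : IsSphere p G)
    (hH : IsSphere q H) {x : V ⊕ W} (hx : x ∈ (G.join H).verts) : 0 ≤ p + q + 1 := by
  rcases x with v | w
  · linarith [hG.nonneg_of_mem (by simpa using hx), hH.neg_one_le]
  · linarith [hG.neg_one_le, hH.nonneg_of_mem (by simpa using hx)]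

end FGraph

/-- The Zykov join of a `p`-sphere and a `q`-sphere is a `(p+q+1)`-sphere. -/
theorem join_spheres {V W : Type} (G : FGraph V) (H : FGraph W) (p q : ℤ)
    (hG : FGraph.IsSphere p G) (hH : FGraph.IsSphere q H) :
    FGraph.IsSphere (p + q + 1) (FGraph.join G H) := by
  open FGraph in
  induction hn : (G.join H).verts.card using Nat.strong_induction_on
    generalizing G H p q with
  | _ n ih =>
  rcases (G.join H).verts.eq_empty_or_nonempty with h₀ | hne
  · obtain ⟨hG₀, hH₀⟩ := Finset.disjSum_eq_empty.mp h₀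
    rw [hG.eq_neg_one_of_verts_eq_empty hG₀, hH.eq_neg_one_of_verts_eq_empty hH₀]
    exact .empty _ h₀
  obtain ⟨x, hx, hc⟩ := exists_contractible_erase_join hG hH hne
  refine .punctured _ _ (.intro _ (nonneg_of_mem_join hG hH hx) _ fun y hy => ?_) x hx hc
  have hlt := hn ▸ (G.join H).card_unitSphere_lt hy
  rcases y with a | b
  · rw [inl_mem_join_verts] at hy
    rw [join_unitSphere_inl _ _ hy] at hlt ⊢
    have := ih _ hlt _ _ _ _ (hG.isSphere_unitSphere hy) hH rfl
    rwa [show p - 1 + q + 1 = p + q + 1 - 1 by ring] at this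
  · rw [inr_mem_join_verts] at hy
    rw [join_unitSphere_inr _ _ hy] at hlt ⊢
    have := ih _ hlt _ _ _ _ hG (hH.isSphere_unitSphere hy) rfl
    rwa [show p + (q - 1) + 1 = p + q + 1 - 1 by ring] at this
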